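/- arXiv:1803.00837 — 3 statements merged into one kernel-verified Lean document; each statement's English description precedes it below -/
import Mathlib

section
/- Let φ₁: A₁ → B and φ₂: A₂ → B be surjective homomorphisms of commutative rings, where A₁ and A₂ are local rings and B is a nonzero ring, and let R = A₁ ×_B A₂ be the fiber product with first projection ψ₁: R → A₁. Then the induced map on unit groups ψ₁: R^× → A₁^× is surjective. -/
/-- The fiber product `A₁ ×_B A₂` of two ring homomorphisms `φ₁ : A₁ → B` and
`φ₂ : A₂ → B`: the subring `{(a₁, a₂) ∈ A₁ × A₂ : φ₁ a₁ = φ₂ a₂}` of `A₁ × A₂`. -/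
def fiberProduct {A₁ A₂ B : Type} [CommRing A₁] [CommRing A₂] [CommRing B]
    (φ₁ : A₁ →+* B) (φ₂ : A₂ →+* B) : Subring (A₁ × A₂) where
  carrier := {p | φ₁ p.1 = φ₂ p.2}
  zero_mem' := by simp
  one_mem' := by simp
  add_mem' := by
    intro a b ha hb
    simp only [Set.mem_setOf_eq, Prod.fst_add, Prod.snd_add, map_add] at *
    rw [ha, hb]
  mul_mem' := by
    intro a b ha hb
    simp only [Set.mem_setOf_eq, Prod.fst_mul, Prod.snd_mul, map_mul] at *
    rw [ha, hb]
  neg_mem' := by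
    intro a ha
    simp only [Set.mem_setOf_eq, Prod.fst_neg, Prod.snd_neg, map_neg] at *
    rw [ha]

/-!
A local surjection `φ₂` lifts every unit of `B` to a unit of `A₂`. Given `u ∈ A₁ˣ`, lift
`φ₁ u` to `u₂ ∈ A₂ˣ`; then `(u, u₂)` and `(u⁻¹, u₂⁻¹)` both lie in the fiber product and are
mutually inverse there.
-/

namespace fiberProduct

variable {A₁ A₂ B : Type} [CommRing A₁] [CommRing A₂] [CommRing B]
  {φ₁ : A₁ →+* B} {φ₂ : A₂ →+* B}

def unitMk (u₁ : A₁ˣ) (u₂ : A₂ˣ) (h : φ₁ u₁ = φ₂ u₂) : (fiberProduct φ₁ φ₂)ˣ where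
  val := ⟨(u₁, u₂), h⟩
  inv := ⟨((u₁⁻¹ : A₁ˣ), (u₂⁻¹ : A₂ˣ)), show φ₁ _ = φ₂ _ by
    have h' : Units.map (φ₁ : A₁ →* B) u₁ = Units.map (φ₂ : A₂ →* B) u₂ := Units.ext h
    simpa only [Units.coe_map_inv, MonoidHom.coe_coe] using
      congrArg (fun v : Bˣ ↦ ((v⁻¹ : Bˣ) : B)) h'⟩
  val_inv := by ext <;> simp
  inv_val := by ext <;> simp

theorem units_map_fst_surjective (h : Function.Surjective (Units.map (φ₂ : A₂ →* B))) :
    Function.Surjective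
      (Units.map (((RingHom.fst A₁ A₂).comp (fiberProduct φ₁ φ₂).subtype) :
        (fiberProduct φ₁ φ₂) →* A₁)) := by
  intro u
  obtain ⟨u₂, hu₂⟩ := h (Units.map (φ₁ : A₁ →* B) u)
  exact ⟨unitMk u u₂ (congrArg Units.val hu₂).symm, Units.ext rfl⟩

end fiberProduct

theorem fiberProduct_units_map_surjective_general
    {A₁ A₂ B : Type} [CommRing A₁] [CommRing A₂] [CommRing B]
    [IsLocalRing A₂] [Nontrivial B]
    (φ₁ : A₁ →+* B) (φ₂ : A₂ →+* B)
    (hφ₂ : Function.Surjective φ₂) :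
    Function.Surjective
      (Units.map (((RingHom.fst A₁ A₂).comp (fiberProduct φ₁ φ₂).subtype) :
        (fiberProduct φ₁ φ₂) →* A₁)) :=
  fiberProduct.units_map_fst_surjective <|
    IsLocalRing.surjective_units_map_of_local_ringHom φ₂ hφ₂ (.of_surjective φ₂ hφ₂)

/-- Let `φ₁ : A₁ → B` and `φ₂ : A₂ → B` be surjective homomorphisms of commutative
rings, where `A₁` and `A₂` are local rings and `B` is a nonzero ring. Then the first
projection `ψ₁ : R → A₁` from the fiber product `R = A₁ ×_B A₂` induces a surjective
map on unit groups `Rˣ → A₁ˣ`. -/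
theorem fiberProduct_units_map_surjective
    {A₁ A₂ B : Type} [CommRing A₁] [CommRing A₂] [CommRing B]
    [IsLocalRing A₁] [IsLocalRing A₂] [Nontrivial B]
    (φ₁ : A₁ →+* B) (φ₂ : A₂ →+* B)
    (hφ₁ : Function.Surjective φ₁) (hφ₂ : Function.Surjective φ₂) :
    Function.Surjective
      (Units.map (((RingHom.fst A₁ A₂).comp (fiberProduct φ₁ φ₂).subtype) :
        (fiberProduct φ₁ φ₂) →* A₁)) :=
  fiberProduct_units_map_surjective_general φ₁ φ₂ hφ₂
end

section
/- Let φ₁: A₁ → B and φ₂: A₂ → B be homomorphisms of commutative rings, let R = A₁ ×_B A₂ be the fiber product with projections ψ₁: R → A₁ and ψ₂: R → A₂, and set I = ker(ψ₂) and J = ker(φ₁). Then ψ₁ restricts to a group isomorphism from ker(R^× → (R/I)^×) onto ker(A₁^× → (A₁/J)^×), where these kernels are the groups of units mapping to 1 in the respective quotient rings. -/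
/- A unit of `R` is `1` modulo `ker ψ₂` exactly when it has the form `(a, 1)`, and then
`φ₁ a = φ₂ 1 = 1`; conversely `(a, 1)` is a unit of `R` with inverse `(a⁻¹, 1)` whenever
`φ₁ a = 1`. So both sets are `{a ∈ A₁ˣ : φ₁ a = 1}`, and `ψ₁` is the identification. -/

lemma Ideal.Quotient.mk_ker_eq_one_iff {R S : Type*} [CommRing R] [Ring S] (f : R →+* S)
    (x : R) : Ideal.Quotient.mk (RingHom.ker f) x = 1 ↔ f x = 1 := by
  rw [Ideal.Quotient.mk_eq_one_iff_sub_mem, RingHom.sub_mem_ker_iff, map_one]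

namespace fiberProduct

variable {A₁ A₂ B : Type} [CommRing A₁] [CommRing A₂] [CommRing B]
  {φ₁ : A₁ →+* B} {φ₂ : A₂ →+* B}

lemma map_fst_eq_map_snd (x : fiberProduct φ₁ φ₂) :
    φ₁ (x : A₁ × A₂).1 = φ₂ (x : A₁ × A₂).2 :=
  x.2

def mkUnit (a : A₁ˣ) (b : A₂ˣ) (h : φ₁ a = φ₂ b) : (fiberProduct φ₁ φ₂)ˣ where
  val := ⟨(a, b), h⟩
  inv := ⟨(↑a⁻¹, ↑b⁻¹), by
    have h' : Units.map (φ₁ : A₁ →* B) a = Units.map (φ₂ : A₂ →* B) b := Units.ext h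
    exact congrArg (fun u : Bˣ => ((u⁻¹ : Bˣ) : B)) h'⟩
  val_inv := Subtype.ext (Prod.ext a.mul_inv b.mul_inv)
  inv_val := Subtype.ext (Prod.ext a.inv_mul b.inv_mul)

lemma units_ext {u v : (fiberProduct φ₁ φ₂)ˣ}
    (h₁ : ((u : fiberProduct φ₁ φ₂) : A₁ × A₂).1 = ((v : fiberProduct φ₁ φ₂) : A₁ × A₂).1)
    (h₂ : ((u : fiberProduct φ₁ φ₂) : A₁ × A₂).2 = ((v : fiberProduct φ₁ φ₂) : A₁ × A₂).2) :
    u = v :=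
  Units.ext (Subtype.ext (Prod.ext h₁ h₂))

end fiberProduct

/-- Let `φ₁ : A₁ → B` and `φ₂ : A₂ → B` be homomorphisms of commutative rings, let
`R = A₁ ×_B A₂` be the fiber product with projections `ψ₁ : R → A₁`, `ψ₂ : R → A₂`,
and set `I = ker ψ₂`, `J = ker φ₁`. Then `ψ₁` restricts to a group isomorphism
(a bijection, compatible with multiplication since it is induced by a ring map) from
`ker(Rˣ → (R/I)ˣ)` onto `ker(A₁ˣ → (A₁/J)ˣ)`, the groups of units mapping to `1` in
the respective quotient rings. -/
theorem fiberProduct_units_bijOn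
    {A₁ A₂ B : Type} [CommRing A₁] [CommRing A₂] [CommRing B]
    (φ₁ : A₁ →+* B) (φ₂ : A₂ →+* B) :
    Set.BijOn
      (Units.map (((RingHom.fst A₁ A₂).comp (fiberProduct φ₁ φ₂).subtype) :
        (fiberProduct φ₁ φ₂) →* A₁))
      {u : (fiberProduct φ₁ φ₂)ˣ |
        Ideal.Quotient.mk
          (RingHom.ker ((RingHom.snd A₁ A₂).comp (fiberProduct φ₁ φ₂).subtype))
          (u : fiberProduct φ₁ φ₂) = 1}
      {v : A₁ˣ | Ideal.Quotient.mk (RingHom.ker φ₁) (v : A₁) = 1} := by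
  simp only [Set.BijOn, Set.MapsTo, Set.InjOn, Set.SurjOn, Set.subset_def, Set.mem_image,
    Set.mem_ofPred_eq, Ideal.Quotient.mk_ker_eq_one_iff, Units.coe_map, MonoidHom.coe_coe,
    RingHom.comp_apply, Subring.coe_subtype, RingHom.coe_fst, RingHom.coe_snd]
  refine ⟨fun u hu => ?_, fun u hu v hv huv => ?_, fun a ha => ?_⟩
  · exact (fiberProduct.map_fst_eq_map_snd _).trans (hu ▸ map_one φ₂)
  · exact fiberProduct.units_ext (congrArg Units.val huv) (hu.trans hv.symm)
  · exact ⟨fiberProduct.mkUnit a 1 (ha.trans (map_one φ₂).symm), rfl, rfl⟩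
end

section
/- Let A be a commutative Noetherian ring and let a ∈ A be a nonzerodivisor such that the quotient ring A/(a) is reduced and nonzero. Let 𝔭 be a prime ideal of A that is minimal over the principal ideal (a) (i.e. 𝔭 is a minimal element among the primes containing (a)). Then the localization A_𝔭 is a discrete valuation ring; in particular its maximal ideal 𝔭A_𝔭 is generated by the image of a. -/
/-!
As `(a)` is radical and `𝔭` is minimal over it, `(a) A_𝔭` is a radical ideal whose only prime
over it is the maximal ideal, so it is the maximal ideal. In a Noetherian local ring whose
maximal ideal is generated by `x`, Krull's intersection theorem writes every nonzero element as
a unit times a power of `x`; when `x` is a nonzerodivisor this forces a domain, hence a DVR.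
-/

open IsLocalRing

section

variable {R : Type*} [CommRing R]

theorem IsLocalization.AtPrime.map_eq_map_of_mem_minimalPrimes (S : Type*) [CommRing S]
    [Algebra R S] (q : Ideal R) [q.IsPrime] [IsLocalization.AtPrime S q] {I : Ideal R}
    (hI : I.IsRadical) (hq : q ∈ I.minimalPrimes) :
    q.map (algebraMap R S) = I.map (algebraMap R S) := by
  rw [← IsLocalization.AtPrime.radical_map_of_mem_minimalPrimes S q I hq,
    ← IsLocalization.map_radical q.primeCompl S, Ideal.radical_eq_iff.mpr hI]

theorem IsLocalRing.finiteMultiplicity_of_ne_zero [IsNoetherianRing R] [IsLocalRing R] {x y : R}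
    (hx : ¬IsUnit x) (hy : y ≠ 0) : FiniteMultiplicity x y := by
  have hbot := Ideal.iInf_pow_eq_bot_of_isLocalRing (Ideal.span {x})
    (Ideal.span_singleton_ne_top hx)
  by_contra hinf
  refine hy <| (Submodule.mem_bot R).mp <| hbot ▸ Ideal.mem_iInf.mpr fun n ↦ ?_
  rw [Ideal.span_singleton_pow, Ideal.mem_span_singleton]
  exact (FiniteMultiplicity.not_iff_forall.mp hinf) n

theorem IsLocalRing.associated_pow_of_maximalIdeal_eq_span [IsNoetherianRing R] [IsLocalRing R]
    {x y : R} (hm : maximalIdeal R = Ideal.span {x}) (hy : y ≠ 0) :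
    ∃ n : ℕ, Associated (x ^ n) y := by
  have hx : x ∈ maximalIdeal R := hm ▸ Ideal.mem_span_singleton_self x
  obtain ⟨c, hyc, hc⟩ := (finiteMultiplicity_of_ne_zero hx hy).exists_eq_pow_mul_and_not_dvd
  have hcu : IsUnit c := by
    by_contra h
    exact hc (Ideal.mem_span_singleton.mp (hm ▸ h : c ∈ Ideal.span {x}))
  exact ⟨_, hyc ▸ associated_mul_unit_right _ _ hcu⟩

theorem IsLocalRing.isDomain_of_maximalIdeal_eq_span [IsNoetherianRing R] [IsLocalRing R] {x : R}
    (hx : x ∈ nonZeroDivisors R) (hm : maximalIdeal R = Ideal.span {x}) : IsDomain R := by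
  have : NoZeroDivisors R := by
    refine ⟨fun {y z} hyz ↦ or_iff_not_and_not.mpr fun ⟨hy, hz⟩ ↦ ?_⟩
    obtain ⟨n, hn⟩ := associated_pow_of_maximalIdeal_eq_span hm hy
    obtain ⟨k, hk⟩ := associated_pow_of_maximalIdeal_eq_span hm hz
    have hxnk : x ^ (n + k) ≠ 0 := nonZeroDivisors.ne_zero (pow_mem hx _)
    exact hxnk ((pow_add x n k ▸ hn.mul_mul hk).eq_zero_iff.mpr hyz)
  exact NoZeroDivisors.to_isDomain R

theorem IsDiscreteValuationRing.of_maximalIdeal_eq_span [IsNoetherianRing R] [IsLocalRing R]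
    [IsDomain R] {x : R} (hx : x ≠ 0) (hm : IsLocalRing.maximalIdeal R = Ideal.span {x}) :
    IsDiscreteValuationRing R :=
  ofHasUnitMulPowIrreducibleFactorization
    ⟨x, irreducible_of_span_eq_maximalIdeal x hx hm,
      fun hy ↦ associated_pow_of_maximalIdeal_eq_span hm hy⟩

end

theorem localization_dvr_of_minimal_over_regular_general
    {A : Type} [CommRing A] [IsNoetherianRing A] (a : A)
    (ha : a ∈ nonZeroDivisors A)
    (hred : IsReduced (A ⧸ Ideal.span ({a} : Set A)))
    (p : Ideal A) [p.IsPrime]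
    (hp : p ∈ (Ideal.span ({a} : Set A)).minimalPrimes) :
    IsDomain (Localization.AtPrime p)
      ∧ IsPrincipalIdealRing (Localization.AtPrime p)
      ∧ ¬ IsField (Localization.AtPrime p)
      ∧ IsLocalRing.maximalIdeal (Localization.AtPrime p)
          = Ideal.span {algebraMap A (Localization.AtPrime p) a} := by
  set x := algebraMap A (Localization.AtPrime p) a
  have hm : maximalIdeal (Localization.AtPrime p) = Ideal.span {x} := by
    rw [← Localization.AtPrime.map_eq_maximalIdeal,
      IsLocalization.AtPrime.map_eq_map_of_mem_minimalPrimes _ p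
      ((Ideal.isRadical_iff_quotient_reduced _).mpr hred) hp, Ideal.map_span, Set.image_singleton]
  have hx : x ∈ nonZeroDivisors (Localization.AtPrime p) :=
    IsLocalization.nonZeroDivisors_le_comap p.primeCompl _ ha
  have : IsNoetherianRing (Localization.AtPrime p) :=
    IsLocalization.isNoetherianRing p.primeCompl _ ‹_›
  have := isDomain_of_maximalIdeal_eq_span hx hm
  have := IsDiscreteValuationRing.of_maximalIdeal_eq_span (nonZeroDivisors.ne_zero hx) hm
  exact ⟨‹_›, inferInstance, IsDiscreteValuationRing.not_isField _, hm⟩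

/-- Let `A` be a commutative Noetherian ring and let `a ∈ A` be a nonzerodivisor such
that the quotient ring `A/(a)` is reduced and nonzero. Let `p` be a prime ideal of `A`
that is minimal over the principal ideal `(a)`. Then the localization `A_p` is a
discrete valuation ring (a local principal ideal domain which is not a field); in
particular its maximal ideal `p A_p` is generated by the image of `a`. -/
theorem localization_dvr_of_minimal_over_regular
    {A : Type} [CommRing A] [IsNoetherianRing A] (a : A)
    (ha : a ∈ nonZeroDivisors A)
    (hred : IsReduced (A ⧸ Ideal.span ({a} : Set A)))
    (hnz : Nontrivial (A ⧸ Ideal.span ({a} : Set A)))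
    (p : Ideal A) [p.IsPrime]
    (hp : p ∈ (Ideal.span ({a} : Set A)).minimalPrimes) :
    IsDomain (Localization.AtPrime p)
      ∧ IsPrincipalIdealRing (Localization.AtPrime p)
      ∧ ¬ IsField (Localization.AtPrime p)
      ∧ IsLocalRing.maximalIdeal (Localization.AtPrime p)
          = Ideal.span {algebraMap A (Localization.AtPrime p) a} :=
  localization_dvr_of_minimal_over_regular_general a ha hred p hp
end
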